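/- Let q = 4f + 1 be a prime power and let F_q have primitive element w. Let C_0 = ⟨w^4⟩ and C_i = w^i C_0 for i = 0,1,2,3 be the fourth-order cyclotomic classes. Suppose C_0 ∪ {0} is a (q, (q+3)/4, (q+3)/16)-difference set in G = (F_q, +). Let l ∈ {0,1,2,3}, P = G \ (C_l ∪ {0}) and N = C_l ∪ {0}. Then D = P - N is a (q, q, (q-9)/4)-signed difference set. -/

import Mathlib

open Finset

noncomputable def eltA {H : Type*} [AddGroup H] (S : Finset H) : AddMonoidAlgebra ℤ H :=
  ∑ s ∈ S, AddMonoidAlgebra.single s 1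

noncomputable def starA {H : Type*} [AddGroup H] [Fintype H]
    (A : AddMonoidAlgebra ℤ H) : AddMonoidAlgebra ℤ H :=
  ∑ h : H, AddMonoidAlgebra.single (-h) (A.coeff h)

/-- The fourth-order cyclotomic class `C_l = {w^{4j+l} : 0 ≤ j ≤ f-1}`. -/
def cycClass {F : Type*} [Field F] [Fintype F] [DecidableEq F]
    (w : Fˣ) (f l : ℕ) : Finset F :=
  (Finset.range f).image fun j => (w : F) ^ (4 * j + l)

section Aux
set_option linter.unusedSectionVars false
variable {H : Type*} [AddCommGroup H] [Fintype H] [DecidableEq H]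

lemma eltA_apply (S : Finset H) (h : H) :
    (eltA S).coeff h = if h ∈ S then (1:ℤ) else 0 := by
  unfold eltA
  rw [AddMonoidAlgebra.coeff_sum, Finset.sum_apply']
  simp [Finsupp.single_apply]

lemma starA_eltA (S : Finset H) :
    starA (eltA S) = ∑ s ∈ S, AddMonoidAlgebra.single (-s) (1:ℤ) := by
  unfold starA
  simp only [eltA_apply]
  calc (∑ h : H, AddMonoidAlgebra.single (-h) (if h ∈ S then (1:ℤ) else 0))
      = ∑ h : H, (if h ∈ S then AddMonoidAlgebra.single (-h) (1:ℤ) else 0) := by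
        refine Finset.sum_congr rfl fun h _ => ?_; split <;> simp
    _ = ∑ s ∈ S, AddMonoidAlgebra.single (-s) (1:ℤ) := by
        rw [Finset.sum_ite_mem, Finset.univ_inter]

lemma mul_eltA_starA (S T : Finset H) :
    eltA S * starA (eltA T) = ∑ a ∈ S, ∑ b ∈ T, AddMonoidAlgebra.single (a - b) (1:ℤ) := by
  rw [starA_eltA]; unfold eltA
  rw [Finset.sum_mul_sum]
  refine Finset.sum_congr rfl fun a _ => Finset.sum_congr rfl fun b _ => ?_
  rw [AddMonoidAlgebra.single_mul_single, mul_one, sub_eq_add_neg]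

lemma sum_single_sub_left (a : H) :
    ∑ b : H, AddMonoidAlgebra.single (a - b) (1:ℤ) = eltA univ :=
  Fintype.sum_equiv (Equiv.subLeft a) _ _ (fun _ => rfl)

lemma sum_single_sub_right (b : H) :
    ∑ a : H, AddMonoidAlgebra.single (a - b) (1:ℤ) = eltA univ :=
  Fintype.sum_equiv (Equiv.subRight b) _ _ (fun _ => rfl)

lemma starA_sub (A B : AddMonoidAlgebra ℤ H) :
    starA (A - B) = starA A - starA B := by
  unfold starA
  rw [← Finset.sum_sub_distrib]
  refine Finset.sum_congr rfl fun h _ => ?_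
  exact AddMonoidAlgebra.single_sub (-h) (A.coeff h) (B.coeff h)

lemma eltA_mul_starA_univ (S : Finset H) :
    eltA S * starA (eltA (univ : Finset H)) = (S.card : ℤ) • eltA (univ : Finset H) := by
  rw [mul_eltA_starA]
  rw [Finset.sum_congr rfl (fun a _ => sum_single_sub_left (H := H) a), Finset.sum_const,
    natCast_zsmul]

lemma eltA_univ_mul_starA (T : Finset H) :
    eltA (univ : Finset H) * starA (eltA T) = (T.card : ℤ) • eltA (univ : Finset H) := by
  rw [mul_eltA_starA, Finset.sum_comm]
  rw [Finset.sum_congr rfl (fun b _ => sum_single_sub_right (H := H) b), Finset.sum_const,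
    natCast_zsmul]

lemma amaMapDomain_finset_sum {K L ι : Type*} (f : K → L) (s : Finset ι)
    (g : ι → AddMonoidAlgebra ℤ K) :
    AddMonoidAlgebra.mapDomain f (∑ i ∈ s, g i) = ∑ i ∈ s, AddMonoidAlgebra.mapDomain f (g i) :=
  map_sum (AddMonoidAlgebra.mapDomainLinearMap ℤ ℤ f) g s

end Aux

/-- if `C_0 ∪ {0}` is a `(q,(q+3)/4,(q+3)/16)`-difference set in
`(F_q,+)` (`q = 4f+1`), then for each `l ∈ {0,1,2,3}`, taking
`P = G \ (C_l ∪ {0})` and `N = C_l ∪ {0}`, the signed set `D = P - N` is a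
`(q, q, (q-9)/4)`-signed difference set. -/
theorem sds_from_cyclotomic_ds_q9 {F : Type*} [Field F] [Fintype F] [DecidableEq F]
    (q f : ℕ) (hq : q = Fintype.card F) (hqf : q = 4 * f + 1)
    (w : Fˣ) (hw : ∀ u : Fˣ, u ∈ Subgroup.zpowers w)
    (kDS lamDS : ℤ) (hkDS : 4 * kDS = (q : ℤ) + 3) (hlamDS : 16 * lamDS = (q : ℤ) + 3)
    (hDS : eltA (insert (0 : F) (cycClass w f 0)) * starA (eltA (insert (0 : F) (cycClass w f 0))) =
      lamDS • (eltA (univ : Finset F) - AddMonoidAlgebra.single 0 1) +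
        kDS • AddMonoidAlgebra.single 0 1)
    (l : ℕ) (hl : l < 4)
    (P N : Finset F)
    (hP : P = univ \ insert (0 : F) (cycClass w f l))
    (hN : N = insert (0 : F) (cycClass w f l))
    (lam : ℤ) (hlam : 4 * lam = (q : ℤ) - 9) :
    (eltA P - eltA N) * starA (eltA P - eltA N) =
      lam • (eltA (univ : Finset F) - AddMonoidAlgebra.single 0 1) +
        (q : ℤ) • AddMonoidAlgebra.single 0 1 := by
  classical
  have hq2 : 2 ≤ Fintype.card F := Fintype.one_lt_card
  have horder : orderOf w = 4 * f := by
    rw [orderOf_eq_card_of_forall_mem_zpowers hw, Nat.card_eq_fintype_card,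
      Fintype.card_units, ← hq, hqf]
    omega
  -- injectivity of exponent maps
  have hinj : ∀ m : ℕ, m < 4 → ∀ j ∈ Finset.range f, ∀ j' ∈ Finset.range f,
      (w : F) ^ (4 * j + m) = (w : F) ^ (4 * j' + m) → j = j' := by
    intro m hm j hj j' hj' hjj
    simp only [Finset.mem_range] at hj hj'
    have hu : w ^ (4 * j + m) = w ^ (4 * j' + m) := by
      apply Units.ext
      simpa using hjj
    have := (pow_eq_pow_iff_modEq).mp hu
    rw [horder] at this
    have h1 : (4 * j + m) % (4 * f) = 4 * j + m := Nat.mod_eq_of_lt (by omega)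
    have h2 : (4 * j' + m) % (4 * f) = 4 * j' + m := Nat.mod_eq_of_lt (by omega)
    unfold Nat.ModEq at this
    omega
  have hwne : (w : F) ≠ 0 := Units.ne_zero w
  have hzero : ∀ m : ℕ, (0 : F) ∉ cycClass w f m := by
    intro m h0
    unfold cycClass at h0
    obtain ⟨j, _, hj⟩ := Finset.mem_image.mp h0
    exact pow_ne_zero _ hwne hj
  have hcard : ∀ m : ℕ, m < 4 → (insert (0 : F) (cycClass w f m)).card = f + 1 := by
    intro m hm
    rw [Finset.card_insert_of_notMem (hzero m)]
    unfold cycClass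
    rw [Finset.card_image_of_injOn (fun j hj j' hj' h => hinj m hm j hj j' hj' h),
      Finset.card_range]
  -- the multiplier
  set c : F := (w : F) ^ l with hc
  have hcne : c ≠ 0 := pow_ne_zero _ hwne
  set N0 : Finset F := insert (0 : F) (cycClass w f 0) with hN0
  have hNimg : insert (0 : F) (cycClass w f l) = N0.image (fun x => c * x) := by
    rw [hN0, Finset.image_insert, mul_zero]
    congr 1
    unfold cycClass
    rw [Finset.image_image]
    refine Finset.image_congr fun j _ => ?_
    show (w : F) ^ (4 * j + l) = c * (w : F) ^ (4 * j + 0)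
    rw [hc, add_zero, pow_add, mul_comm]
  have hcinj : ∀ x ∈ N0, ∀ y ∈ N0, c * x = c * y → x = y := fun x _ y _ h =>
    mul_left_cancel₀ hcne h
  -- N N* via mapDomain
  have hAA : eltA N * starA (eltA N) =
      lamDS • (eltA (univ : Finset F) - AddMonoidAlgebra.single 0 1) +
        kDS • AddMonoidAlgebra.single 0 1 := by
    have step1 : eltA N * starA (eltA N) =
        AddMonoidAlgebra.mapDomain (fun x => c * x) (eltA N0 * starA (eltA N0)) := by
      rw [hN, hNimg, mul_eltA_starA, mul_eltA_starA,
        Finset.sum_image hcinj]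
      rw [amaMapDomain_finset_sum]
      refine Finset.sum_congr rfl fun a _ => ?_
      rw [Finset.sum_image hcinj, amaMapDomain_finset_sum]
      refine Finset.sum_congr rfl fun b _ => ?_
      rw [AddMonoidAlgebra.mapDomain_single, mul_sub]
    have hmapδ : AddMonoidAlgebra.mapDomain (fun x => c * x)
        (AddMonoidAlgebra.single (0:F) (1:ℤ)) = AddMonoidAlgebra.single (0:F) (1:ℤ) := by
      rw [AddMonoidAlgebra.mapDomain_single, mul_zero]
    have hmapG : AddMonoidAlgebra.mapDomain (fun x => c * x) (eltA (univ : Finset F)) =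
        eltA (univ : Finset F) := by
      unfold eltA
      rw [amaMapDomain_finset_sum]
      simp only [AddMonoidAlgebra.mapDomain_single]
      exact Fintype.sum_equiv (Equiv.mulLeft₀ c hcne) _ _ (fun _ => rfl)
    have hmapsub : ∀ X Y : AddMonoidAlgebra ℤ F,
        AddMonoidAlgebra.mapDomain (fun x => c * x) (X - Y) =
          AddMonoidAlgebra.mapDomain (fun x => c * x) X - AddMonoidAlgebra.mapDomain (fun x => c * x) Y := by
      intro X Y
      exact map_sub (AddMonoidAlgebra.mapDomainLinearMap ℤ ℤ (fun x : F => c * x)) X Y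
    have hmapsmul : ∀ (n : ℤ) (X : AddMonoidAlgebra ℤ F),
        AddMonoidAlgebra.mapDomain (fun x => c * x) (n • X) =
          n • AddMonoidAlgebra.mapDomain (fun x => c * x) X := fun n X =>
      map_smul (AddMonoidAlgebra.mapDomainLinearMap ℤ ℤ (fun x : F => c * x)) n X
    rw [step1, hDS]
    rw [AddMonoidAlgebra.mapDomain_add, hmapsmul, hmapsmul,
      hmapsub, hmapδ, hmapG]
  -- P relation
  have hPN : eltA P + eltA N = eltA (univ : Finset F) := by
    rw [hP, hN]
    unfold eltA
    exact Finset.sum_sdiff (Finset.subset_univ _)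
  have hPe : eltA P = eltA (univ : Finset F) - eltA N := eq_sub_of_add_eq hPN
  have hNcard : (N.card : ℤ) = (f : ℤ) + 1 := by rw [hN, hcard l hl]; push_cast; ring
  have hGG : eltA (univ : Finset F) * starA (eltA (univ : Finset F)) =
      (q : ℤ) • eltA (univ : Finset F) := by
    rw [eltA_mul_starA_univ, Finset.card_univ, ← hq]
  have hAG : eltA N * starA (eltA (univ : Finset F)) =
      ((f : ℤ) + 1) • eltA (univ : Finset F) := by
    rw [eltA_mul_starA_univ, hNcard]
  have hGA : eltA (univ : Finset F) * starA (eltA N) =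
      ((f : ℤ) + 1) • eltA (univ : Finset F) := by
    rw [eltA_univ_mul_starA, hNcard]
  rw [hPe, starA_sub, starA_sub]
  set Gu := eltA (univ : Finset F)
  set A := eltA N
  have expand : (Gu - A - A) * (starA Gu - starA A - starA A) =
      Gu * starA Gu - (Gu * starA A + Gu * starA A) - (A * starA Gu + A * starA Gu)
        + (A * starA A + A * starA A + A * starA A + A * starA A) := by
    ring
  rw [expand, hGG, hGA, hAG, hAA]
  have hq' : (q : ℤ) = 4 * (f : ℤ) + 1 := by exact_mod_cast hqf
  match_scalars <;> omega
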